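/- arXiv:2405.03625 — 2 statements merged into one kernel-verified Lean document; each statement's English description precedes it below -/
import Mathlib

section
/- For every k ≥ 0, the harmonic-type series S_w(k) = Σ 1/m, summed over positive integers m whose minimal b-ary representation contains exactly k occurrences of the block w, is finite; moreover S_w(k) ≤ b · Z_w(k)(1/b) where Z_w(k)(t) = Σ_l N_w(k,l) t^l. -/
open scoped BigOperators

/-- Number of (possibly overlapping) occurrences of the block `w` in `X`. -/
def occCount {α : Type*} [DecidableEq α] (w X : List α) : ℕ :=
  ((List.range X.length).filter fun i => (X.drop i).take w.length = w).length

/-- `Nw b w k l`: the number of strings of length `l` over `{0,…,b-1}` containing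
exactly `k` occurrences of `w`. -/
def Nw (b : ℕ) (w : List (Fin b)) (k l : ℕ) : ℕ :=
  Fintype.card {f : Fin l → Fin b // occCount w (List.ofFn f) = k}

/-- The general term of the series `S_w(k)`: `1/m` if the minimal base-`b` representation
of the positive integer `m` contains exactly `k` occurrences of `w`, and `0` otherwise. -/
noncomputable def Sterm (b : ℕ) (w : List (Fin b)) (k m : ℕ) : ℝ :=
  if m ≠ 0 ∧ occCount (w.map Fin.val) (Nat.digits b m).reverse = k then (m : ℝ)⁻¹ else 0

/-!
A positive integer `m` with `L` digits satisfies `b ^ L ≤ b * m`, and distinct integers have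
distinct digit strings, so `S_w(k)` is at most `b` times the sum of `b ^ (-|L|)` over the strings
`L` with exactly `k` occurrences of `w`; grouped by length, this sum is `Z_w(k)(1/b)`.

For its convergence, cut a string of length `l` into `⌊l / p⌋` disjoint blocks of length `p`
and a tail: at most `k` of the blocks equal `w`. Weighting every string by `x ^ (number of blocks
equal to w)` gives `N_w(k, l) ≤ x⁻ᵏ (b ^ p - 1 + x) ^ ⌊l / p⌋ b ^ (l mod p)`, and with `x = 1/2`,
`N_w(k, l) b⁻ˡ ≤ 2 ^ k (1 - 1 / (2 b ^ p)) ^ ⌊l / p⌋`.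
-/

theorem card_subtype_le_inv_pow_mul_sum_pow {ι : Type*} [Fintype ι] {P : ι → Prop}
    [DecidablePred P] (B : ι → ℕ) {k : ℕ} (hB : ∀ i, P i → B i ≤ k) {x : ℝ} (hx0 : 0 < x)
    (hx1 : x ≤ 1) : (Fintype.card {i // P i} : ℝ) ≤ x⁻¹ ^ k * ∑ i, x ^ B i := by
  rw [Fintype.card_subtype, Finset.mul_sum, Finset.card_eq_sum_ones, Nat.cast_sum,
    Finset.sum_filter]
  refine Finset.sum_le_sum fun i _ => ?_
  split_ifs with hi
  · calc ((1 : ℕ) : ℝ) = x⁻¹ ^ k * x ^ k := by rw [inv_pow, inv_mul_cancel₀ (by positivity)]; simp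
      _ ≤ x⁻¹ ^ k * x ^ B i := by gcongr _ * ?_; exact pow_le_pow_of_le_one hx0.le hx1 (hB i hi)
  · positivity

theorem sum_pow_card_filter_eq {ι X R : Type*} [Fintype ι] [DecidableEq ι] [Fintype X]
    [DecidableEq X] [CommSemiring R] (a : X) (x : R) :
    ∑ g : ι → X, x ^ (Finset.univ.filter fun i => g i = a).card
      = (x + (Fintype.card X - 1 : ℕ)) ^ Fintype.card ι := by
  have hfactor : ∀ g : ι → X, x ^ (Finset.univ.filter fun i => g i = a).card
      = ∏ i, if g i = a then x else 1 := by
    intro g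
    rw [Finset.prod_ite, Finset.prod_const, Finset.prod_const_one, mul_one]
  have hfiber : ∑ c : X, (if c = a then x else 1) = x + (Fintype.card X - 1 : ℕ) := by
    rw [Finset.sum_ite, Finset.sum_const, Finset.sum_const, Finset.filter_eq',
      Finset.filter_ne', Finset.card_erase_of_mem (Finset.mem_univ a)]
    simp
  simp_rw [hfactor, ← Fintype.prod_sum (fun _ c => if c = a then x else 1), hfiber,
    Finset.prod_const, Finset.card_univ]

theorem summable_pow_div {ρ : ℝ} (h0 : 0 ≤ ρ) (h1 : ρ < 1) (p : ℕ) [NeZero p] :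
    Summable fun l : ℕ => ρ ^ (l / p) := by
  have hprod : Summable fun x : ℕ × Fin p => ρ ^ x.1 * 1 :=
    (summable_geometric_of_lt_one h0 h1).mul_of_nonneg (Summable.of_finite)
      (fun _ => by positivity) (fun _ => zero_le_one)
  simp only [mul_one] at hprod
  convert (Nat.divModEquiv p).summable_iff.mpr hprod using 2 with l
  simp [Nat.divModEquiv]

section Blocks

variable {α : Type*}

def blocksEquiv (q p r : ℕ) :
    (Fin q → Fin p → α) × (Fin r → α) ≃ (Fin (q * p + r) → α) :=
  (((Equiv.curry _ _ _).symm.trans (finProdFinEquiv.arrowCongr (Equiv.refl α))).prodCongr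
    (Equiv.refl _)).trans (Fin.appendEquiv _ _)

theorem blocksEquiv_apply_castAdd {q p r : ℕ} (g : Fin q → Fin p → α) (h : Fin r → α) (j : Fin q)
    (t : Fin p) : blocksEquiv q p r (g, h) (Fin.castAdd r (finProdFinEquiv (j, t))) = g j t := by
  simp [blocksEquiv]

theorem take_drop_ofFn {n : ℕ} (f : Fin n → α) {i p : ℕ} (h : i + p ≤ n) :
    ((List.ofFn f).drop i).take p = List.ofFn fun t : Fin p => f ⟨i + t, by omega⟩ := by
  apply List.ext_getElem
  · simp; omega
  · intro n h1 h2
    simp [List.getElem_take, List.getElem_drop]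

theorem card_le_occCount [DecidableEq α] {w X : List α} {S : Finset ℕ}
    (hS : ∀ i ∈ S, i < X.length ∧ (X.drop i).take w.length = w) : S.card ≤ occCount w X := by
  have : S ⊆ (Finset.range X.length).filter fun i => (X.drop i).take w.length = w := by
    intro i hi
    simpa using hS i hi
  exact (Finset.card_le_card this).trans_eq rfl

theorem card_blocks_eq_le_occCount [DecidableEq α] {q r : ℕ} (w : List α) (hw : 0 < w.length)
    (g : Fin q → Fin w.length → α) (h : Fin r → α) :
    (Finset.univ.filter fun j => g j = w.get).card
      ≤ occCount w (List.ofFn (blocksEquiv q w.length r (g, h))) := by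
  have hinj : Function.Injective fun j : Fin q => (j : ℕ) * w.length :=
    fun i j hij => Fin.ext (Nat.eq_of_mul_eq_mul_right hw hij)
  rw [← Finset.card_image_of_injective _ hinj]
  refine card_le_occCount fun i hi => ?_
  obtain ⟨j, hj, rfl⟩ := Finset.mem_image.mp hi
  have hjq : (j : ℕ) * w.length + w.length ≤ q * w.length := by
    nlinarith [j.2]
  refine ⟨by simp; omega, ?_⟩
  rw [take_drop_ofFn _ (by omega)]
  conv_rhs => rw [← List.ofFn_get w, ← (Finset.mem_filter.mp hj).2]
  congr 1
  funext t
  rw [← blocksEquiv_apply_castAdd g h j t]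
  exact congrArg _ (Fin.ext (by simp only [Fin.val_castAdd, finProdFinEquiv_apply_val]; ring))

end Blocks

theorem Nw_mul_add_le (b : ℕ) (w : List (Fin b)) (hw : 0 < w.length) (k q r : ℕ) {x : ℝ}
    (hx0 : 0 < x) (hx1 : x ≤ 1) :
    (Nw b w k (q * w.length + r) : ℝ)
      ≤ x⁻¹ ^ k * ((x + (b ^ w.length - 1 : ℕ)) ^ q * b ^ r) := by
  rw [Nw, ← Fintype.card_congr ((blocksEquiv q w.length r).subtypeEquiv fun _ => Iff.rfl)]
  refine (card_subtype_le_inv_pow_mul_sum_pow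
    (fun gh => (Finset.univ.filter fun j => gh.1 j = w.get).card)
    (fun gh hgh => hgh ▸ card_blocks_eq_le_occCount w hw gh.1 gh.2) hx0 hx1).trans_eq ?_
  simp only [Fintype.sum_prod_type, Finset.sum_const, Finset.card_univ, Fintype.card_fun,
    Fintype.card_fin, nsmul_eq_mul]
  rw [← Finset.mul_sum, sum_pow_card_filter_eq, Fintype.card_fun, Fintype.card_fin,
    Fintype.card_fin, Fintype.card_fin]
  push_cast
  ring

theorem Nw_mul_inv_pow_le (b : ℕ) (hb : 0 < b) (w : List (Fin b)) (hw : 0 < w.length) (k l : ℕ) :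
    (Nw b w k l : ℝ) * (b : ℝ)⁻¹ ^ l
      ≤ 2 ^ k * (1 - (2 * (b : ℝ) ^ w.length)⁻¹) ^ (l / w.length) := by
  have hNw := Nw_mul_add_le b w hw k (l / w.length) (l % w.length) (x := 1 / 2) (by norm_num)
    (by norm_num)
  rw [Nat.div_add_mod'] at hNw
  have hbp : 1 ≤ b ^ w.length := Nat.one_le_pow _ _ hb
  calc (Nw b w k l : ℝ) * (b : ℝ)⁻¹ ^ l
      ≤ (1 / 2)⁻¹ ^ k * ((1 / 2 + (b ^ w.length - 1 : ℕ)) ^ (l / w.length) * b ^ (l % w.length))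
        * (b : ℝ)⁻¹ ^ (l / w.length * w.length + l % w.length) := by
        rw [Nat.div_add_mod']
        exact mul_le_mul_of_nonneg_right hNw (by positivity)
    _ = 2 ^ k * (1 - (2 * (b : ℝ) ^ w.length)⁻¹) ^ (l / w.length) := by
        have hB : (0 : ℝ) < (b : ℝ) ^ w.length := by positivity
        have hρ : 1 - (2 * (b : ℝ) ^ w.length)⁻¹
            = (1 / 2 + (b ^ w.length - 1 : ℕ)) * ((b : ℝ) ^ w.length)⁻¹ := by
          rw [Nat.cast_sub hbp]; push_cast; field_simp; ring
        have hr : (b : ℝ) ^ (l % w.length) * (b : ℝ)⁻¹ ^ (l % w.length) = 1 := by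
          rw [← mul_pow, mul_inv_cancel₀ (by positivity), one_pow]
        rw [hρ, mul_pow, pow_add, pow_mul', inv_pow (b : ℝ) w.length]
        linear_combination (2 : ℝ) ^ k * (1 / 2 + ((b ^ w.length - 1 : ℕ) : ℝ)) ^ (l / w.length)
          * ((b : ℝ) ^ w.length)⁻¹ ^ (l / w.length) * hr

theorem summable_Nw_mul_inv_pow (b : ℕ) (hb : 0 < b) (w : List (Fin b)) (hw : 0 < w.length)
    (k : ℕ) : Summable fun l => (Nw b w k l : ℝ) * (b : ℝ)⁻¹ ^ l := by
  have : NeZero w.length := ⟨hw.ne'⟩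
  have hbp : (1 : ℝ) ≤ 2 * (b : ℝ) ^ w.length := by
    have : (1 : ℝ) ≤ (b : ℝ) ^ w.length := one_le_pow₀ (by exact_mod_cast hb)
    linarith
  refine Summable.of_nonneg_of_le (fun l => by positivity) (Nw_mul_inv_pow_le b hb w hw k)
    ((summable_pow_div ?_ ?_ _).mul_left _)
  · exact sub_nonneg.mpr (inv_le_one_of_one_le₀ hbp)
  · exact sub_lt_self _ (by positivity)

theorem hasSum_indicator_occCount_eq (b : ℕ) (w : List (Fin b)) (k : ℕ) {x : ℝ} (hx : 0 ≤ x)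
    (h : Summable fun l => (Nw b w k l : ℝ) * x ^ l) :
    HasSum (fun L : List (Fin b) => if occCount w L = k then x ^ L.length else 0)
      (∑' l, (Nw b w k l : ℝ) * x ^ l) := by
  rw [← List.equivSigmaTuple.symm.hasSum_iff]
  have hfiber : ∀ l, HasSum (fun f : Fin l → Fin b =>
      if occCount w (List.ofFn f) = k then x ^ (List.ofFn f).length else 0)
        ((Nw b w k l : ℝ) * x ^ l) := by
    intro l
    rw [show (Nw b w k l : ℝ) * x ^ l = ∑ f : Fin l → Fin b,
        if occCount w (List.ofFn f) = k then x ^ (List.ofFn f).length else 0 by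
      simp [Nw, Fintype.card_subtype, Finset.sum_ite]]
    exact hasSum_fintype _
  refine h.hasSum.sigma_of_hasSum hfiber ((summable_sigma_of_nonneg fun _ => ?_).mpr
    ⟨fun l => (hfiber l).summable, (summable_congr fun l => (hfiber l).tsum_eq).mpr h⟩)
  dsimp only [Function.comp_apply]
  split_ifs <;> positivity

theorem occCount_map {α β : Type*} [DecidableEq α] [DecidableEq β] {g : α → β}
    (hg : Function.Injective g) (w X : List α) :
    occCount (w.map g) (X.map g) = occCount w X := by
  simp only [occCount, List.length_map, ← List.map_drop, ← List.map_take,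
    (List.map_injective_iff.mpr hg).eq_iff]

def digitsFin (b : ℕ) (hb : 1 < b) (m : ℕ) : List (Fin b) :=
  (Nat.digits b m).reverse.pmap Fin.mk fun _ hd =>
    Nat.digits_lt_base hb (List.mem_reverse.mp hd)

theorem map_val_digitsFin (b : ℕ) (hb : 1 < b) (m : ℕ) :
    (digitsFin b hb m).map Fin.val = (Nat.digits b m).reverse := by
  simp [digitsFin, List.map_pmap]

theorem digitsFin_injective (b : ℕ) (hb : 1 < b) : Function.Injective (digitsFin b hb) := by
  intro m n h
  have := congrArg (fun L => Nat.ofDigits b (L.map Fin.val).reverse) h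
  simpa only [map_val_digitsFin, List.reverse_reverse, Nat.ofDigits_digits] using this

theorem Sterm_le_digitsFin (b : ℕ) (hb : 1 < b) (w : List (Fin b)) (k m : ℕ) :
    Sterm b w k m ≤ b * (if occCount w (digitsFin b hb m) = k
      then (b : ℝ)⁻¹ ^ (digitsFin b hb m).length else 0) := by
  have hlen : (digitsFin b hb m).length = (Nat.digits b m).length := by
    simp [digitsFin]
  rw [Sterm, ← occCount_map Fin.val_injective, map_val_digitsFin, hlen]
  split_ifs with hm hocc hocc
  · have hle : (b : ℝ) ^ (Nat.digits b m).length ≤ b * m := by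
      exact_mod_cast Nat.base_pow_length_digits_le b m hb hm.1
    have hm0 : (0 : ℝ) < m := by exact_mod_cast Nat.pos_of_ne_zero hm.1
    rw [inv_pow, ← div_eq_mul_inv, le_div_iff₀ (by positivity), ← div_eq_inv_mul,
      div_le_iff₀ hm0]
    linarith
  · exact absurd hm.2 hocc
  all_goals positivity

theorem Sterm_nonneg (b : ℕ) (w : List (Fin b)) (k m : ℕ) : 0 ≤ Sterm b w k m := by
  unfold Sterm
  split_ifs <;> positivity

/-- `S_w(k)` is finite, and bounded above by `b · Z_w(k)(1/b)`. -/
theorem stmt3 (b : ℕ) (hb : 1 < b) (w : List (Fin b)) (hw : 1 ≤ w.length) (k : ℕ) :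
    (Summable fun m : ℕ => Sterm b w k m) ∧
    ∑' m : ℕ, Sterm b w k m ≤ (b : ℝ) * ∑' l : ℕ, (Nw b w k l : ℝ) * ((b : ℝ)⁻¹) ^ l := by
  set F : List (Fin b) → ℝ := fun L => if occCount w L = k then (b : ℝ)⁻¹ ^ L.length else 0
  have hF0 : ∀ L, 0 ≤ F L := fun L => by dsimp only [F]; split_ifs <;> positivity
  have hF := hasSum_indicator_occCount_eq b w k (by positivity)
    (summable_Nw_mul_inv_pow b (by omega) w hw k)
  have hinj := digitsFin_injective b hb
  have hmajorant : Summable fun m => (b : ℝ) * F (digitsFin b hb m) :=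
    (hF.summable.comp_injective hinj).mul_left _
  have hsum : Summable fun m => Sterm b w k m :=
    hmajorant.of_nonneg_of_le (Sterm_nonneg b w k) (Sterm_le_digitsFin b hb w k)
  refine ⟨hsum, ?_⟩
  calc ∑' m, Sterm b w k m ≤ ∑' m, (b : ℝ) * F (digitsFin b hb m) :=
        hsum.tsum_le_tsum (Sterm_le_digitsFin b hb w k) hmajorant
    _ = b * ∑' m, (F ∘ digitsFin b hb) m := tsum_mul_left
    _ ≤ b * ∑' L, F L := by gcongr; exact tsum_comp_le_tsum_of_inj hF.summable hF0 hinj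
    _ = _ := by rw [hF.tsum_eq]
end

section
/- For all k ≥ 0, Z_w(v,k)(t) = (t^{2-p} Z_w(v,0,u)(t))^k · Z_w(v,0)(t) as formal power series, where v is the (p-1)-suffix and u the (p-1)-prefix of w. -/
open scoped BigOperators
open PowerSeries

/-- Number of strings of length `l` over `{0,…,b-1}` with exactly `k` occurrences of `w`,
starting with `x` and ending with `y` (an empty `x` or `y` imposes no constraint). -/
def Nxy (b : ℕ) (w x y : List (Fin b)) (k l : ℕ) : ℕ :=
  Fintype.card {f : Fin l → Fin b //
    occCount w (List.ofFn f) = k ∧ x <+: List.ofFn f ∧ y <:+ List.ofFn f}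

/-- The generating series `Z_w(x,k,y)(t)` as a formal power series over `ℚ`. -/
noncomputable def Zser (b : ℕ) (w x y : List (Fin b)) (k : ℕ) : PowerSeries ℚ :=
  PowerSeries.mk fun l => (Nxy b w x y k l : ℚ)

/-!
Cut a word `X` containing `w` at the first occurrence, `X = A ++ w ++ R`, where "first" means
`¬ w <:+: A ++ w.dropLast`. Every other occurrence of `w` in `X` lies either in
`Y = A ++ w.dropLast` (it starts before the cut) or in `Z = w.tail ++ R` (it starts after), so
`X ↦ (Y, Z)` is a bijection from words starting with `v` with `k + 1` occurrences onto pairs of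
a word starting with `v`, ending with `u` and free of `w`, and a word starting with `v` with `k`
occurrences. As `|Y| + |Z| + 2 = |X| + p`, this reads `t^p Z_w(v,k+1) = t^2 Z_w(v,0,u) Z_w(v,k)`,
and the theorem follows by induction on `k`.
-/

section Lists

variable {α : Type*} {w : List α}

def glue (w Y Z : List α) : List α :=
  Y ++ w.drop (w.length - 1) ++ Z.drop (w.length - 1)

lemma glue_append_append (A R : List α) :
    glue w (A ++ w.dropLast) (w.tail ++ R) = A ++ w ++ R := by
  rw [glue, List.append_assoc A, List.dropLast_eq_take, List.take_append_drop,
    List.drop_left' (by rw [List.length_tail])]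

lemma append_dropLast_prefix (A R : List α) : A ++ w.dropLast <+: A ++ w ++ R :=
  ((List.prefix_append_right_inj A).2 (List.dropLast_prefix w)).trans (List.prefix_append _ R)

lemma exists_eq_append_append_not_infix (hw : w ≠ []) {X : List α} (h : w <:+: X) :
    ∃ A R, X = A ++ w ++ R ∧ ¬ w <:+: A ++ w.dropLast := by
  obtain ⟨A, R, hX⟩ := h
  induction hn : A.length using Nat.strong_induction_on generalizing A R with
  | _ n ih =>
    by_cases hA : w <:+: A ++ w.dropLast
    · obtain ⟨A₀, S, hS⟩ := hA
      have hlen := congrArg List.length hS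
      simp only [List.length_append, List.length_dropLast] at hlen
      have hwpos := List.length_pos_iff.2 hw
      refine ih A₀.length (by omega) A₀ (S ++ [w.getLast hw] ++ R) ?_ rfl
      calc A₀ ++ w ++ (S ++ [w.getLast hw] ++ R) = A₀ ++ w ++ S ++ [w.getLast hw] ++ R := by
            simp only [List.append_assoc]
        _ = A ++ (w.dropLast ++ [w.getLast hw]) ++ R := by rw [hS, List.append_assoc A]
        _ = X := by rw [List.dropLast_append_getLast hw, hX]
    · exact ⟨A, R, hX.symm, hA⟩

lemma eq_of_append_append_eq {A A' R R' : List α} (hA : ¬ w <:+: A ++ w.dropLast)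
    (hA' : ¬ w <:+: A' ++ w.dropLast) (h : A ++ w ++ R = A' ++ w ++ R') : A = A' ∧ R = R' := by
  suffices hAA' : A = A' by
    subst hAA'
    exact ⟨rfl, by simpa using h⟩
  wlog hle : A.length ≤ A'.length generalizing A A' R R'
  · exact (this hA' hA h.symm (by omega)).symm
  have hpre : A <+: A' :=
    List.prefix_of_prefix_length_le (List.prefix_append_of_prefix (List.prefix_append A w))
      (h ▸ List.prefix_append_of_prefix (List.prefix_append A' w)) hle
  obtain ⟨C, rfl⟩ := hpre
  obtain rfl | hC := eq_or_ne C []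
  · exact (List.append_nil A).symm
  exfalso
  have hwR : w ++ R = C ++ (w ++ R') := by
    simpa only [List.append_assoc, List.append_cancel_left_eq] using h
  have hCpos := List.length_pos_iff.2 hC
  -- the copy of `w` right after `A` already ends inside `A' ++ w.dropLast = A ++ C ++ w.dropLast`
  have hw : w <+: C ++ w.dropLast :=
    List.prefix_of_prefix_length_le (List.prefix_append w R)
      (hwR ▸ (List.prefix_append_right_inj C).2
        ((List.dropLast_prefix w).trans (List.prefix_append w R')))
      (by simp only [List.length_append, List.length_dropLast]; omega)
  exact hA' (hw.isInfix.trans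
    (by simpa only [List.append_assoc] using (List.suffix_append A _).isInfix))

end Lists

section Occurrences

variable {α : Type*} [DecidableEq α] {w : List α}

lemma occCount_cons (a : α) (X : List α) :
    occCount w (a :: X) = (if w <+: a :: X then 1 else 0) + occCount w X := by
  rw [occCount, List.length_cons, List.range_succ_eq_map, List.filter_cons, List.filter_map]
  have hpre : w = (a :: X).take w.length ↔ w <+: a :: X := List.prefix_iff_eq_take.symm
  by_cases h : w <+: a :: X <;> simp [hpre, h, occCount, Function.comp_def, eq_comm, add_comm]

lemma occCount_eq_zero_iff (hw : w ≠ []) {X : List α} : occCount w X = 0 ↔ ¬ w <:+: X := by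
  induction X with
  | nil => simpa [occCount] using hw
  | cons a X ih => rw [occCount_cons, List.infix_cons_iff, not_or, ← ih]; split_ifs <;> simp_all

lemma occCount_append (hw : w ≠ []) (A B : List α) :
    occCount w (A ++ B) = occCount w (A ++ B.take (w.length - 1)) + occCount w B := by
  induction A with
  | nil =>
    rw [List.nil_append, List.nil_append,
      (occCount_eq_zero_iff hw (X := B.take (w.length - 1))).2 fun h => ?_, zero_add]
    have := h.length_le
    simp only [List.length_take] at this
    have := List.length_pos_iff.2 hw
    omega
  | cons a A ih =>
    have hpre : w <+: a :: (A ++ B.take (w.length - 1)) ↔ w <+: a :: (A ++ B) := by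
      rw [← List.cons_append, ← List.cons_append, ← List.take_length_add_append,
        List.prefix_take_iff, and_iff_left_iff_imp]
      intro _
      simp only [List.length_cons]
      omega
    simp only [List.cons_append, occCount_cons, ih, hpre]
    omega

lemma occCount_append_append (hw : w ≠ []) (A R : List α) :
    occCount w (A ++ w ++ R) = occCount w (A ++ w.dropLast) + 1 + occCount w (w.tail ++ R) := by
  have hle : w.length - 1 ≤ w.length := Nat.sub_le _ _
  rw [List.append_assoc, occCount_append hw, List.take_append_of_le_length hle,
    ← List.dropLast_eq_take]
  obtain ⟨a, v, rfl⟩ := List.exists_cons_of_ne_nil hw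
  have hpre : a :: v <+: a :: (v ++ R) := List.prefix_append (a :: v) R
  rw [List.cons_append, occCount_cons, if_pos hpre]
  simp only [List.tail_cons]
  omega

end Occurrences

section WeightSeries

variable {α β : Type*}

noncomputable def weightSeries (wt : α → ℕ) : PowerSeries ℚ :=
  PowerSeries.mk fun n => (Nat.card {a // wt a = n} : ℚ)

lemma weightSeries_congr (e : α ≃ β) {wα : α → ℕ} {wβ : β → ℕ}
    (h : ∀ a, wβ (e a) = wα a) :
    weightSeries wβ = weightSeries wα := by
  ext n
  simp only [weightSeries, coeff_mk]
  exact congrArg _ (Nat.card_congr (e.subtypeEquiv fun a => by rw [h])).symm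

lemma weightSeries_add_const (wt : α → ℕ) (c : ℕ) :
    weightSeries (fun a => wt a + c) = X ^ c * weightSeries wt := by
  ext n
  rw [mul_comm, coeff_mul_X_pow', weightSeries, weightSeries, coeff_mk]
  split_ifs with hc
  · rw [coeff_mk]
    exact congrArg _ (Nat.card_congr (Equiv.subtypeEquivRight fun a => by omega))
  · simp only [Nat.cast_eq_zero]
    have : IsEmpty {a // wt a + c = n} := ⟨fun a => hc (by omega)⟩
    exact Nat.card_of_isEmpty

open Finset in
lemma weightSeries_prod (wα : α → ℕ) (wβ : β → ℕ) [∀ n, Finite {a // wα a = n}]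
    [∀ n, Finite {b // wβ b = n}] :
    weightSeries (fun p : α × β => wα p.1 + wβ p.2) = weightSeries wα * weightSeries wβ := by
  ext n
  let e : {p : α × β // wα p.1 + wβ p.2 = n} ≃
      Σ ij : HasAntidiagonal.antidiagonal n, {a // wα a = ij.1.1} × {b // wβ b = ij.1.2} :=
    { toFun := fun p => ⟨⟨(wα p.1.1, wβ p.1.2), HasAntidiagonal.mem_antidiagonal.2 p.2⟩,
        ⟨p.1.1, rfl⟩, ⟨p.1.2, rfl⟩⟩
      invFun := fun q => ⟨(q.2.1, q.2.2), by
        rw [q.2.1.2, q.2.2.2]; exact HasAntidiagonal.mem_antidiagonal.1 q.1.2⟩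
      left_inv := fun p => rfl
      right_inv := fun ⟨⟨(i, j), hij⟩, ⟨a, ha⟩, ⟨b, hb⟩⟩ => by
        dsimp only at ha hb
        subst ha hb
        rfl }
  rw [coeff_mul, weightSeries, coeff_mk, Nat.card_congr e, Nat.card_sigma]
  simp only [weightSeries, coeff_mk, Nat.card_prod, Nat.cast_sum, Nat.cast_mul]
  exact Finset.sum_coe_sort _ fun ij : ℕ × ℕ =>
    (Nat.card {a // wα a = ij.1} : ℚ) * Nat.card {b // wβ b = ij.2}

end WeightSeries

section Words

variable {α : Type*}

noncomputable def ofFnSubtypeEquiv (P : List α → Prop) (n : ℕ) :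
    {f : Fin n → α // P (List.ofFn f)} ≃ {X : {X // P X} // X.1.length = n} :=
  Equiv.ofBijective (fun f => ⟨⟨List.ofFn f.1, f.2⟩, List.length_ofFn⟩) <| by
    refine ⟨fun f g h => Subtype.ext (List.ofFn_injective (congrArg (·.1.1) h)), ?_⟩
    rintro ⟨⟨X, hX⟩, rfl⟩
    exact ⟨⟨X.get, by rwa [List.ofFn_get]⟩, by simp only [List.ofFn_get]⟩

instance [Finite α] (P : List α → Prop) (n : ℕ) :
    Finite {X : {X // P X} // X.1.length = n} :=
  Finite.of_equiv _ (ofFnSubtypeEquiv P n)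

variable [DecidableEq α]

abbrev OccWords (w x y : List α) (k : ℕ) : Type _ :=
  {X : List α // occCount w X = k ∧ x <+: X ∧ y <:+ X}

lemma Zser_eq_weightSeries (b : ℕ) (w x y : List (Fin b)) (k : ℕ) :
    Zser b w x y k = weightSeries fun X : OccWords w x y k => X.1.length := by
  ext l
  simp only [Zser, weightSeries, coeff_mk, Nxy, ← Nat.card_eq_fintype_card]
  exact congrArg _ (Nat.card_congr
    (ofFnSubtypeEquiv (fun X => occCount w X = k ∧ x <+: X ∧ y <:+ X) l))

end Words

section Glue

variable {α : Type*} [DecidableEq α] {w : List α}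

lemma glue_mem (hw : w ≠ []) {k : ℕ} {Y Z : List α}
    (hY : occCount w Y = 0 ∧ w.tail <+: Y ∧ w.dropLast <:+ Y)
    (hZ : occCount w Z = k ∧ w.tail <+: Z ∧ [] <:+ Z) :
    occCount w (glue w Y Z) = k + 1 ∧ w.tail <+: glue w Y Z ∧ [] <:+ glue w Y Z := by
  obtain ⟨hY0, hYv, A, rfl⟩ := hY
  obtain ⟨hZk, ⟨R, rfl⟩, -⟩ := hZ
  rw [glue_append_append, occCount_append_append hw, hY0, hZk]
  exact ⟨by omega, hYv.trans (append_dropLast_prefix A R), List.nil_suffix⟩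

def glueMap (hw : w ≠ []) (k : ℕ) :
    OccWords w w.tail w.dropLast 0 × OccWords w w.tail [] k → OccWords w w.tail [] (k + 1) :=
  fun YZ => ⟨glue w YZ.1 YZ.2, glue_mem hw YZ.1.2 YZ.2.2⟩

lemma length_glueMap (hw : w ≠ []) (k : ℕ)
    (YZ : OccWords w w.tail w.dropLast 0 × OccWords w w.tail [] k) :
    (glueMap hw k YZ).1.length + w.length = YZ.1.1.length + YZ.2.1.length + 2 := by
  obtain ⟨⟨Y, -, -, A, rfl⟩, ⟨Z, -, ⟨R, rfl⟩, -⟩⟩ := YZ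
  have := List.length_pos_iff.2 hw
  simp only [glueMap, glue_append_append, List.length_append, List.length_dropLast,
    List.length_tail]
  omega

lemma glueMap_bijective (hw : w ≠ []) (k : ℕ) : Function.Bijective (glueMap hw k) := by
  constructor
  · rintro ⟨⟨Y, hY0, _, A, rfl⟩, ⟨Z, _, ⟨R, rfl⟩, _⟩⟩
      ⟨⟨Y', hY0', _, A', rfl⟩, ⟨Z', _, ⟨R', rfl⟩, _⟩⟩ h
    have h' := congrArg Subtype.val h
    simp only [glueMap, glue_append_append] at h'
    obtain ⟨rfl, rfl⟩ := eq_of_append_append_eq ((occCount_eq_zero_iff hw).1 hY0)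
      ((occCount_eq_zero_iff hw).1 hY0') h'
    rfl
  · rintro ⟨X, hX, hXv, -⟩
    have hinf : w <:+: X := by
      by_contra hn
      rw [(occCount_eq_zero_iff hw).2 hn] at hX
      omega
    obtain ⟨A, R, rfl, hA⟩ := exists_eq_append_append_not_infix hw hinf
    have hA0 := (occCount_eq_zero_iff hw).2 hA
    have hYv : w.tail <+: A ++ w.dropLast :=
      List.prefix_of_prefix_length_le hXv (append_dropLast_prefix A R)
        (by simp only [List.length_tail, List.length_append, List.length_dropLast]; omega)
    have hRk : occCount w (w.tail ++ R) = k := by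
      rw [occCount_append_append hw, hA0] at hX
      omega
    exact ⟨(⟨A ++ w.dropLast, hA0, hYv, List.suffix_append A _⟩,
      ⟨w.tail ++ R, hRk, List.prefix_append _ R, List.nil_suffix⟩),
      Subtype.ext (glue_append_append A R)⟩

end Glue

lemma X_pow_mul_Zser_succ {b : ℕ} {w : List (Fin b)} (hw : w ≠ []) (k : ℕ) :
    (X : PowerSeries ℚ) ^ w.length * Zser b w w.tail [] (k + 1) =
      X ^ 2 * (Zser b w w.tail w.dropLast 0 * Zser b w w.tail [] k) := by
  rw [Zser_eq_weightSeries, Zser_eq_weightSeries, Zser_eq_weightSeries, ← weightSeries_prod,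
    ← weightSeries_add_const, ← weightSeries_add_const]
  exact weightSeries_congr (Equiv.ofBijective _ (glueMap_bijective hw k)) (length_glueMap hw k)

theorem stmt5_general (b : ℕ) (w : List (Fin b)) (hw : 1 ≤ w.length) (k : ℕ) :
    (X : PowerSeries ℚ) ^ (w.length * k) * Zser b w (w.drop 1) [] k =
      (X ^ 2 * Zser b w (w.drop 1) (w.take (w.length - 1)) 0) ^ k *
        Zser b w (w.drop 1) [] 0 := by
  have hw' : w ≠ [] := List.length_pos_iff.1 hw
  rw [List.drop_one, ← List.dropLast_eq_take]
  induction k with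
  | zero => simp
  | succ k ih =>
    calc (X : PowerSeries ℚ) ^ (w.length * (k + 1)) * Zser b w w.tail [] (k + 1)
        = X ^ (w.length * k) * (X ^ w.length * Zser b w w.tail [] (k + 1)) := by ring
      _ = X ^ 2 * Zser b w w.tail w.dropLast 0 *
            (X ^ (w.length * k) * Zser b w w.tail [] k) := by
          rw [X_pow_mul_Zser_succ hw']; ring
      _ = _ := by rw [ih]; ring

/-- `Z_w(v,k) = (t^{2-p} Z_w(v,0,u))^k Z_w(v,0)` (stated multiplied through by `t^{pk}`
to avoid negative exponents): `t^{pk} Z_w(v,k) = (t^2 Z_w(v,0,u))^k Z_w(v,0)`. -/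
theorem stmt5 (b : ℕ) (hb : 1 < b) (w : List (Fin b)) (hw : 1 ≤ w.length) (k : ℕ) :
    (X : PowerSeries ℚ) ^ (w.length * k) * Zser b w (w.drop 1) [] k =
      (X ^ 2 * Zser b w (w.drop 1) (w.take (w.length - 1)) 0) ^ k *
        Zser b w (w.drop 1) [] 0 :=
  stmt5_general b w hw k
end
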